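/- (Sequential step optimality) Let Γ = diag(γ₁,…,γ_M) with all γⱼ > 0 and ρ > 0. Among V ∈ ℂ^{M×L} with VᴴV = I_L, the quantity tr((Γ⁻¹ + ρVVᴴ)⁻¹) is minimized by choosing V to consist of the standard basis vectors e_{j₁},…,e_{j_L} corresponding to the L largest values of γⱼ²/(γⱼ + 1/ρ), and the minimum equals Σ_{j∉{j₁,…,j_L}} γⱼ + Σ_{k=1}^{L} γ_{j_k}/(1 + ργ_{j_k}). -/

import Mathlib

/-!
By the Woodbury identity, `tr((Γ⁻¹ + ρVVᴴ)⁻¹) = tr Γ - tr(B⁻¹ Vᴴ Γ² V)` with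
`B = Vᴴ (Γ + ρ⁻¹) V`. Writing `W = (Γ + ρ⁻¹)^{1/2} V`, so that `B = WᴴW`, the subtracted term is
`tr(D P)`, where `D = diag(γⱼ² / (γⱼ + ρ⁻¹))` and `P = W (WᴴW)⁻¹ Wᴴ` is the orthogonal projection
onto the range of `W`. The diagonal entries of a rank-`L` orthogonal projection lie in `[0, 1]`
and sum to `L`, so `tr(D P)` is at most the sum of the `L` largest diagonal entries of `D`;
`V = [e_{j₁} ⋯ e_{j_L}]` attains this bound.
-/

open Matrix
open scoped ComplexOrder

namespace Finset

lemma exists_between_of_forall_le {α : Type*} [Fintype α] (S : Finset α) (μ : α → ℝ)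
    (hμ : ∀ i ∈ S, ∀ j ∉ S, μ j ≤ μ i) :
    ∃ t, (∀ i ∈ S, t ≤ μ i) ∧ ∀ j ∉ S, μ j ≤ t := by
  rcases S.eq_empty_or_nonempty with rfl | hS
  · exact ⟨∑ j, |μ j|, by simp, fun j _ => (le_abs_self _).trans
      (single_le_sum (fun k _ => abs_nonneg (μ k)) (mem_univ j))⟩
  · obtain ⟨i₀, hi₀, hmin⟩ := S.exists_min_image μ hS
    exact ⟨μ i₀, hmin, fun j hj => hμ i₀ hi₀ j hj⟩

lemma sum_mul_le_sum_of_forall_le {α : Type*} [Fintype α] [DecidableEq α] (S : Finset α)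
    (μ p : α → ℝ) (hμ : ∀ i ∈ S, ∀ j ∉ S, μ j ≤ μ i) (hp : ∀ j, p j ∈ Set.Icc 0 1)
    (hsum : ∑ j, p j = S.card) :
    ∑ j, μ j * p j ≤ ∑ i ∈ S, μ i := by
  obtain ⟨t, hS, hSc⟩ := S.exists_between_of_forall_le μ hμ
  have hterm : ∀ j, 0 ≤ (μ j - t) * ((if j ∈ S then 1 else 0) - p j) := fun j => by
    obtain ⟨hp0, hp1⟩ := hp j
    by_cases hj : j ∈ S
    · simp only [hj, if_true]
      exact mul_nonneg (by linarith [hS j hj]) (by linarith)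
    · simp only [hj, if_false]
      exact mul_nonneg_of_nonpos_of_nonpos (by linarith [hSc j hj]) (by linarith)
  have hexpand : ∑ j, (μ j - t) * ((if j ∈ S then 1 else 0) - p j)
      = ∑ i ∈ S, μ i - ∑ j, μ j * p j := by
    simp only [sub_mul, mul_sub, sum_sub_distrib, mul_ite, mul_one, mul_zero, sum_ite_mem,
      univ_inter, sum_const, ← mul_sum, hsum, nsmul_eq_mul]
    ring
  linarith [sum_nonneg fun j (_ : j ∈ univ) => hterm j]

end Finset

namespace Matrix

variable {𝕜 m n : Type*} [RCLike 𝕜]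

lemma IsHermitian.re_apply_self_mem_Icc [Fintype m] {P : Matrix m m 𝕜} (hP : P.IsHermitian)
    (hPP : IsIdempotentElem P) (j : m) : RCLike.re (P j j) ∈ Set.Icc 0 1 := by
  have hPHP : Pᴴ * P = P := by rw [hP.eq, hPP.eq]
  have hsum : RCLike.re (P j j) = ∑ k, ‖P k j‖ ^ 2 := by
    conv_lhs => rw [← hPHP]
    simp only [mul_apply, conjTranspose_apply, RCLike.star_def, RCLike.conj_mul, map_sum,
      RCLike.re_ofReal_pow]
  have hdiag : ‖P j j‖ ^ 2 ≤ RCLike.re (P j j) :=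
    hsum ▸ Finset.single_le_sum (fun k _ => sq_nonneg ‖P k j‖) (Finset.mem_univ j)
  have hre := RCLike.re_sq_le_normSq (P j j)
  rw [RCLike.normSq_eq_def'] at hre
  constructor <;> nlinarith

lemma isHermitian_mul_inv_mul_conjTranspose [Fintype m] [Fintype n] [DecidableEq n]
    (W : Matrix m n 𝕜) : (W * (Wᴴ * W)⁻¹ * Wᴴ).IsHermitian :=
  isHermitian_mul_mul_conjTranspose W (isHermitian_conjTranspose_mul_self W).inv

lemma isIdempotentElem_mul_inv_mul_conjTranspose [Fintype m] [Fintype n] [DecidableEq n]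
    {W : Matrix m n 𝕜} (hW : IsUnit (Wᴴ * W)) : IsIdempotentElem (W * (Wᴴ * W)⁻¹ * Wᴴ) := by
  have hinv := (Wᴴ * W).nonsing_inv_mul ((isUnit_iff_isUnit_det _).mp hW)
  simp only [IsIdempotentElem, Matrix.mul_assoc]
  rw [← Matrix.mul_assoc Wᴴ W, ← Matrix.mul_assoc (Wᴴ * W)⁻¹, hinv, Matrix.one_mul]

lemma trace_mul_inv_mul_conjTranspose [Fintype m] [Fintype n] [DecidableEq n]
    {W : Matrix m n 𝕜} (hW : IsUnit (Wᴴ * W)) :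
    trace (W * (Wᴴ * W)⁻¹ * Wᴴ) = Fintype.card n := by
  rw [trace_mul_cycle, (Wᴴ * W).mul_nonsing_inv ((isUnit_iff_isUnit_det _).mp hW), trace_one]

lemma exists_trace_inv_mul_diagonal_eq_sum [Fintype m] [Fintype n] [DecidableEq m]
    [DecidableEq n] (W : Matrix m n 𝕜) (hW : IsUnit (Wᴴ * W)) (d : m → ℝ) :
    ∃ p : m → ℝ, (∀ j, p j ∈ Set.Icc 0 1) ∧ ∑ j, p j = Fintype.card n ∧
      trace ((Wᴴ * W)⁻¹ * (Wᴴ * diagonal (fun j => (d j : 𝕜)) * W)) =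
        ((∑ j, d j * p j : ℝ) : 𝕜) := by
  set P := W * (Wᴴ * W)⁻¹ * Wᴴ
  have hP : P.IsHermitian := isHermitian_mul_inv_mul_conjTranspose W
  have hPjj : ∀ j, (RCLike.re (P j j) : 𝕜) = P j j := fun j =>
    RCLike.conj_eq_iff_re.mp (hP.apply j j)
  refine ⟨fun j => RCLike.re (P j j), hP.re_apply_self_mem_Icc
    (isIdempotentElem_mul_inv_mul_conjTranspose hW), ?_, ?_⟩
  · simpa [trace, P] using congrArg RCLike.re (trace_mul_inv_mul_conjTranspose hW)
  · calc trace ((Wᴴ * W)⁻¹ * (Wᴴ * diagonal (fun j => (d j : 𝕜)) * W))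
        = trace (diagonal (fun j => (d j : 𝕜)) * P) := by
          simp only [P, Matrix.mul_assoc]
          rw [trace_mul_comm, Matrix.mul_assoc, trace_mul_comm, Matrix.mul_assoc,
            Matrix.mul_assoc]
      _ = ((∑ j, d j * RCLike.re (P j j) : ℝ) : 𝕜) := by
          simp [trace, diagonal_mul, hPjj]

lemma trace_inv_add_smul_mul_conjTranspose {K : Type*} [Field K] [StarRing K] [Fintype m]
    [Fintype n] [DecidableEq m] [DecidableEq n] {Γ : Matrix m m K} {V : Matrix m n K} {ρ : K}
    (hΓ : IsUnit Γ) (hρ : ρ ≠ 0) (hB : IsUnit (ρ⁻¹ • 1 + Vᴴ * Γ * V)) :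
    trace ((Γ⁻¹ + ρ • (V * Vᴴ))⁻¹) =
      trace Γ - trace ((ρ⁻¹ • 1 + Vᴴ * Γ * V)⁻¹ * (Vᴴ * (Γ * Γ) * V)) := by
  have hρ1 : IsUnit (ρ • 1 : Matrix n n K) := (isUnit_iff_isUnit_det _).mpr (by simp [hρ])
  have hinv : (ρ • 1 : Matrix n n K)⁻¹ = ρ⁻¹ • 1 := inv_eq_right_inv (by simp [smul_smul, hρ])
  have hwoodbury := add_mul_mul_inv_eq_sub Γ⁻¹ V (ρ • 1) Vᴴ
    (isUnit_nonsing_inv_iff.mpr hΓ) hρ1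
  rw [hinv, nonsing_inv_nonsing_inv _ ((isUnit_iff_isUnit_det _).mp hΓ),
    show V * (ρ • 1 : Matrix n n K) * Vᴴ = ρ • (V * Vᴴ) by simp] at hwoodbury
  rw [hwoodbury hB, trace_sub]
  congr 1
  rw [trace_mul_cycle, trace_mul_comm, trace_mul_comm _ (Vᴴ * _ * _)]
  simp only [Matrix.mul_assoc]

lemma exists_conjTranspose_mul_self_eq_of_diagonal [Fintype m] [Fintype n] [DecidableEq m]
    [DecidableEq n] {γ : m → ℝ} (hγ : ∀ j, 0 < γ j) {ρ : ℝ} (hρ : 0 < ρ) {V : Matrix m n 𝕜}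
    (hV : Vᴴ * V = 1) :
    ∃ W : Matrix m n 𝕜,
      Wᴴ * W = (ρ : 𝕜)⁻¹ • 1 + Vᴴ * diagonal (fun j => (γ j : 𝕜)) * V ∧
      Wᴴ * diagonal (fun j => ((γ j ^ 2 / (γ j + 1 / ρ) : ℝ) : 𝕜)) * W =
        Vᴴ * (diagonal (fun j => (γ j : 𝕜)) * diagonal (fun j => (γ j : 𝕜))) * V := by
  set E : Matrix m m 𝕜 := diagonal fun j => (√(γ j + 1 / ρ) : 𝕜)
  have hk : ∀ j, 0 < γ j + 1 / ρ := fun j => by have := hγ j; positivity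
  have hsqrt : ∀ j, √(γ j + 1 / ρ) * √(γ j + 1 / ρ) = γ j + 1 / ρ := fun j =>
    Real.mul_self_sqrt (hk j).le
  have hEE : Eᴴ * E = diagonal (fun j => (γ j : 𝕜)) + (ρ : 𝕜)⁻¹ • 1 := by
    rw [← diagonal_one, ← diagonal_smul, diagonal_add, diagonal_conjTranspose,
      diagonal_mul_diagonal]
    congr 1; funext j
    simp only [Pi.star_apply, RCLike.star_def, RCLike.conj_ofReal, ← RCLike.ofReal_mul, hsqrt]
    simp
  have hEDE : Eᴴ * diagonal (fun j => ((γ j ^ 2 / (γ j + 1 / ρ) : ℝ) : 𝕜)) * E =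
      diagonal (fun j => (γ j : 𝕜)) * diagonal (fun j => (γ j : 𝕜)) := by
    rw [diagonal_conjTranspose, diagonal_mul_diagonal, diagonal_mul_diagonal,
      diagonal_mul_diagonal]
    congr 1; funext j
    simp only [Pi.star_apply, RCLike.star_def, RCLike.conj_ofReal, ← RCLike.ofReal_mul]
    rw [mul_right_comm, hsqrt, mul_div_cancel₀ _ (hk j).ne', sq]
  refine ⟨E * V, ?_, ?_⟩
  · rw [conjTranspose_mul, Matrix.mul_assoc, ← Matrix.mul_assoc Eᴴ, hEE]
    simp [Matrix.mul_add, Matrix.add_mul, hV, Matrix.mul_assoc, add_comm]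
  · rw [← hEDE, conjTranspose_mul]
    simp only [Matrix.mul_assoc]

lemma exists_trace_inv_diagonal_add_smul_mul_conjTranspose_eq [Fintype m] [Fintype n]
    [DecidableEq m] [DecidableEq n] {γ : m → ℝ} (hγ : ∀ j, 0 < γ j) {ρ : ℝ} (hρ : 0 < ρ)
    {V : Matrix m n 𝕜} (hV : Vᴴ * V = 1) :
    ∃ p : m → ℝ, (∀ j, p j ∈ Set.Icc 0 1) ∧ ∑ j, p j = Fintype.card n ∧
      trace ((diagonal fun j => (γ j : 𝕜))⁻¹ + (ρ : 𝕜) • (V * Vᴴ))⁻¹ =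
        ((∑ j, γ j - ∑ j, γ j ^ 2 / (γ j + 1 / ρ) * p j : ℝ) : 𝕜) := by
  obtain ⟨W, hWW, hWDW⟩ := exists_conjTranspose_mul_self_eq_of_diagonal hγ hρ hV
  have hB : ((ρ : 𝕜)⁻¹ • 1 + Vᴴ * diagonal (fun j => (γ j : 𝕜)) * V).PosDef :=
    (PosDef.one.smul (by simpa using hρ)).add_posSemidef
      ((PosSemidef.diagonal fun j => by simpa using (hγ j).le).conjTranspose_mul_mul_same V)
  have hΓ : IsUnit (diagonal fun j => (γ j : 𝕜)) := isUnit_diagonal.mpr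
    (Pi.isUnit_iff.mpr fun j => (RCLike.ofReal_ne_zero.mpr (hγ j).ne').isUnit)
  obtain ⟨p, hp, hsum, htr⟩ := exists_trace_inv_mul_diagonal_eq_sum W (hWW ▸ hB.isUnit)
    fun j => γ j ^ 2 / (γ j + 1 / ρ)
  refine ⟨p, hp, hsum, ?_⟩
  rw [trace_inv_add_smul_mul_conjTranspose hΓ (by simpa using hρ.ne') hB.isUnit, ← hWW, ← hWDW,
    htr, trace_diagonal, RCLike.ofReal_sub, RCLike.ofReal_sum, RCLike.ofReal_sum]

lemma inv_diagonal_of_ne_zero [Fintype m] [DecidableEq m] {K : Type*} [Field K] {v : m → K}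
    (hv : ∀ i, v i ≠ 0) : (diagonal v)⁻¹ = diagonal fun i => (v i)⁻¹ :=
  inv_eq_right_inv (by simp [diagonal_mul_diagonal, hv])

lemma of_mul_conjTranspose_of_injective [Fintype n] [DecidableEq m] {R : Type*} [Semiring R]
    [StarRing R] {ι : n → m} (hι : Function.Injective ι) :
    (of fun i k => if i = ι k then 1 else 0 : Matrix m n R) *
        (of fun i k => if i = ι k then 1 else 0 : Matrix m n R)ᴴ =
      diagonal fun i => if i ∈ Set.range ι then 1 else 0 := by
  ext i j
  simp only [mul_apply, conjTranspose_apply, of_apply, diagonal_apply]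
  by_cases hi : i ∈ Set.range ι
  · obtain ⟨k₀, rfl⟩ := hi
    rw [Finset.sum_eq_single k₀ (fun k _ hk => by simp [hι.ne (Ne.symm hk)]) (by simp)]
    rcases eq_or_ne (ι k₀) j with rfl | h
    · simp
    · simp [h, h.symm]
  · have : ∀ k, i ≠ ι k := fun k h => hi ⟨k, h.symm⟩
    simp [this, hi]

lemma trace_inv_diagonal_add_smul_of_mul_conjTranspose [Fintype m] [Fintype n] [DecidableEq m]
    {γ : m → ℝ} (hγ : ∀ j, 0 < γ j) {ρ : ℝ} (hρ : 0 < ρ) {ι : n → m}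
    (hι : Function.Injective ι) :
    trace ((diagonal fun j => (γ j : 𝕜))⁻¹ + (ρ : 𝕜) •
        ((of fun i k => if i = ι k then 1 else 0 : Matrix m n 𝕜) *
          (of fun i k => if i = ι k then 1 else 0 : Matrix m n 𝕜)ᴴ))⁻¹ =
      ((∑ j ∈ (Finset.univ.image ι)ᶜ, γ j + ∑ k, γ (ι k) / (1 + ρ * γ (ι k)) : ℝ) : 𝕜) := by
  have hd : (diagonal fun j => (γ j : 𝕜))⁻¹ + (ρ : 𝕜) •
        diagonal (fun i => if i ∈ Set.range ι then 1 else 0) =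
      diagonal fun j => (((γ j)⁻¹ + if j ∈ Set.range ι then ρ else 0 : ℝ) : 𝕜) := by
    rw [inv_diagonal_of_ne_zero fun j => RCLike.ofReal_ne_zero.mpr (hγ j).ne', ← diagonal_smul,
      diagonal_add]
    congr 1; funext j
    by_cases h : j ∈ Set.range ι <;> simp only [Pi.smul_apply, h, if_true, if_false] <;> simp
  have hd0 : ∀ j, (((γ j)⁻¹ + if j ∈ Set.range ι then ρ else 0 : ℝ) : 𝕜) ≠ 0 := fun j => by
    have := hγ j
    exact RCLike.ofReal_ne_zero.mpr (by split_ifs <;> positivity)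
  rw [of_mul_conjTranspose_of_injective hι, hd, inv_diagonal_of_ne_zero hd0, trace_diagonal,
    ← Finset.sum_compl_add_sum (Finset.univ.image ι), Finset.sum_image hι.injOn]
  push_cast
  congr 1
  · refine Finset.sum_congr rfl fun j hj => ?_
    have : j ∉ Set.range ι := by simpa using hj
    simp [this]
  · refine Finset.sum_congr rfl fun k _ => ?_
    have := hγ (ι k)
    field_simp
    simp

end Matrix

theorem stmt18 (M L : ℕ) (γ : Fin M → ℝ) (hpos : ∀ j, 0 < γ j) (ρ : ℝ) (hρ : 0 < ρ)
    (ι : Fin L → Fin M) (hι : Function.Injective ι)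
    (hlargest : ∀ (k : Fin L) (j : Fin M), j ∉ Set.range ι →
      γ j ^ 2 / (γ j + 1 / ρ) ≤ γ (ι k) ^ 2 / (γ (ι k) + 1 / ρ))
    (Γ : Matrix (Fin M) (Fin M) ℂ) (hΓ : Γ = Matrix.diagonal fun j => (γ j : ℂ))
    (V₀ : Matrix (Fin M) (Fin L) ℂ)
    (hV₀ : V₀ = Matrix.of fun (i : Fin M) (k : Fin L) => if i = ι k then 1 else 0) :
    (∀ V : Matrix (Fin M) (Fin L) ℂ, Vᴴ * V = 1 →
      ((∑ j ∈ (Finset.image ι Finset.univ)ᶜ, γ j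
          + ∑ k, γ (ι k) / (1 + ρ * γ (ι k)) : ℝ) : ℂ) ≤
        Matrix.trace ((Γ⁻¹ + (ρ : ℂ) • (V * Vᴴ))⁻¹)) ∧
    Matrix.trace ((Γ⁻¹ + (ρ : ℂ) • (V₀ * V₀ᴴ))⁻¹) =
      ((∑ j ∈ (Finset.image ι Finset.univ)ᶜ, γ j
          + ∑ k, γ (ι k) / (1 + ρ * γ (ι k)) : ℝ) : ℂ) := by
  subst hΓ hV₀
  set S := Finset.univ.image ι
  set μ : Fin M → ℝ := fun j => γ j ^ 2 / (γ j + 1 / ρ)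
  have hvalue : ∑ j ∈ Sᶜ, γ j + ∑ k, γ (ι k) / (1 + ρ * γ (ι k)) = ∑ j, γ j - ∑ i ∈ S, μ i := by
    have hgap : ∀ j, γ j / (1 + ρ * γ j) = γ j - μ j := fun j => by
      have := hpos j
      simp only [μ]
      field_simp
      ring
    rw [← Finset.sum_compl_add_sum S, Finset.sum_image hι.injOn, Finset.sum_image hι.injOn]
    simp only [hgap, Finset.sum_sub_distrib]
    ring
  have hdominant : ∀ i ∈ S, ∀ j ∉ S, μ j ≤ μ i := fun i hi j hj => by
    obtain ⟨k, -, rfl⟩ := Finset.mem_image.mp hi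
    exact hlargest k j (by simpa [S] using hj)
  refine ⟨fun V hV => ?_, trace_inv_diagonal_add_smul_of_mul_conjTranspose hpos hρ hι⟩
  obtain ⟨p, hp, hsum, htr⟩ := exists_trace_inv_diagonal_add_smul_mul_conjTranspose_eq hpos hρ hV
  have hselect := Finset.sum_mul_le_sum_of_forall_le S μ p hdominant hp
    (by rw [hsum, Finset.card_image_of_injective _ hι]; simp)
  have hreal : ∑ j ∈ Sᶜ, γ j + ∑ k, γ (ι k) / (1 + ρ * γ (ι k)) ≤ ∑ j, γ j - ∑ j, μ j * p j := by
    rw [hvalue]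
    linarith
  exact (Complex.real_le_real.mpr hreal).trans_eq htr.symm
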